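/- Let η ∈ K[[u]] and C_q ∈ K[[u]] for q ≥ 0 all have zero constant term in u, and define Z*(ℏ,u) by 1 + Z*(ℏ,u) = e^{η(u)/ℏ}(1 + ∑_{q≥0} C_q(u) ℏ^q). Then for every integer a ≥ 0: ∑_{m=0}^∞ ∑_{a_1+⋯+a_m = m-a, a_l ≥ 0} ∏_{l=1}^m ((-1)^{a_l}/a_l!) Res_{ℏ=0}{ℏ^{-a_l} Z*(ℏ,u)} = η(u)^a / (1 + C_0(u)). -/

import Mathlib

open PowerSeries

noncomputable section

variable (K : Type*) [Field K]

/-- The coefficient of `ℏ^k` in the Laurent expansion at `ℏ = 0` of a rational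
function. -/
def lcoeff (k : ℤ) (f : RatFunc K) : K := ((f : LaurentSeries K)).coeff k

/-- `Z ∈ K(ℏ)[[u]]` is regular at `ℏ = 0` if each `u`-coefficient has no pole
at `ℏ = 0`. -/
def RegularAtZero (Z : PowerSeries (RatFunc K)) : Prop :=
  ∀ m : ℕ, ∀ k : ℤ, k < 0 → lcoeff K k (PowerSeries.coeff m Z) = 0

/-- `e^{η(u)/ℏ}` as an element of `K(ℏ)[[u]]`: for `η` with zero constant term,
the `u^m`-coefficient of `∑_p η^p ℏ^{-p}/p!` only involves `p ≤ m`. -/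
def expDiv (η : PowerSeries K) : PowerSeries (RatFunc K) :=
  PowerSeries.mk fun m => ∑ p ∈ Finset.range (m + 1),
    (RatFunc.X : RatFunc K)⁻¹ ^ p *
      RatFunc.C ((Nat.factorial p : K)⁻¹ * PowerSeries.coeff m (η ^ p))

/-- `ln(1 + Z)` for `Z ∈ K(ℏ)[[u]]` with zero `u`-constant term, via the formal
logarithm series (the `u^m`-coefficient only involves powers `Z^j` with `j ≤ m`). -/
def logOne (Z : PowerSeries (RatFunc K)) : PowerSeries (RatFunc K) :=
  PowerSeries.mk fun m => ∑ j ∈ Finset.Icc 1 m,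
    (-1 : RatFunc K) ^ (j - 1) * (j : RatFunc K)⁻¹ * PowerSeries.coeff m (Z ^ j)

/-- The coefficientwise residue at `ℏ = 0` of an element of `K(ℏ)[[u]]`. -/
def Res (Z : PowerSeries (RatFunc K)) : PowerSeries K :=
  PowerSeries.mk fun m => lcoeff K (-1) (PowerSeries.coeff m Z)

section Aux
variable {K}

lemma lcoeff_add (k : ℤ) (f g : RatFunc K) :
    lcoeff K k (f + g) = lcoeff K k f + lcoeff K k g := by
  simp [lcoeff, map_add, HahnSeries.coeff_add]

def lcoeffHom (k : ℤ) : RatFunc K →+ K where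
  toFun := lcoeff K k
  map_zero' := by simp [lcoeff]
  map_add' := lcoeff_add k

lemma lcoeff_sum (k : ℤ) {ι : Type*} (s : Finset ι) (f : ι → RatFunc K) :
    lcoeff K k (∑ i ∈ s, f i) = ∑ i ∈ s, lcoeff K k (f i) :=
  map_sum (lcoeffHom k) f s

lemma lcoeff_neg (k : ℤ) (f : RatFunc K) : lcoeff K k (-f) = - lcoeff K k f :=
  map_neg (lcoeffHom k) f

lemma lcoeff_sub (k : ℤ) (f g : RatFunc K) :
    lcoeff K k (f - g) = lcoeff K k f - lcoeff K k g :=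
  map_sub (lcoeffHom k) f g

lemma lcoeff_one (k : ℤ) : lcoeff K k (1 : RatFunc K) = if k = 0 then 1 else 0 := by
  simp [lcoeff, map_one, HahnSeries.coeff_one, eq_comm]

lemma lcoeff_X_inv_pow_mul (j : ℤ) (p : ℕ) (f : RatFunc K) :
    lcoeff K j ((RatFunc.X : RatFunc K)⁻¹ ^ p * f) = lcoeff K (j + p) f := by
  unfold lcoeff
  rw [map_mul, map_pow, map_inv₀, RatFunc.coe_X]
  rw [HahnSeries.inv_single, inv_one, HahnSeries.single_pow]
  have h2 := HahnSeries.coeff_single_mul_add (r := (1:K)^p) (x := ((f : LaurentSeries K)))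
    (a := j + p) (b := p • (-1 : ℤ))
  simpa using h2

lemma hcC (c : K) : ((RatFunc.C c : RatFunc K) : LaurentSeries K) = HahnSeries.C c := by
  rw [← RatFunc.algebraMap_C, ← RatFunc.coePolynomial, ← RatFunc.coe_coe, Polynomial.coe_C]
  exact HahnSeries.ofPowerSeries_C c

lemma lcoeff_C_mul (j : ℤ) (c : K) (f : RatFunc K) :
    lcoeff K j (RatFunc.C c * f) = c * lcoeff K j f := by
  unfold lcoeff
  rw [map_mul, hcC, HahnSeries.C_apply]
  have h2 := HahnSeries.coeff_single_mul_add (r := c) (x := ((f : LaurentSeries K)))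
    (a := j) (b := (0 : ℤ))
  simpa using h2

lemma lcoeff_C (j : ℤ) (c : K) :
    lcoeff K j (RatFunc.C c) = if j = 0 then c else 0 := by
  have := lcoeff_C_mul j c (1 : RatFunc K)
  rw [mul_one] at this
  rw [this, lcoeff_one]
  split <;> simp

lemma lcoeff_X_inv_pow_C_mul (j : ℤ) (p : ℕ) (c : K) (f : RatFunc K) :
    lcoeff K j ((RatFunc.X : RatFunc K)⁻¹ ^ p * RatFunc.C c * f) = c * lcoeff K (j + p) f := by
  rw [mul_assoc, lcoeff_X_inv_pow_mul, lcoeff_C_mul]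

lemma lcoeff_X_inv_pow_C (j : ℤ) (p : ℕ) (c : K) :
    lcoeff K j ((RatFunc.X : RatFunc K)⁻¹ ^ p * RatFunc.C c) = if j + p = 0 then c else 0 := by
  have := lcoeff_X_inv_pow_C_mul j p c (1 : RatFunc K)
  rw [mul_one] at this
  rw [this, lcoeff_one]
  split <;> simp

section PS
variable {R : Type*} [CommRing R]

lemma coeff_pow_tuple (φ : PowerSeries R) (m n : ℕ) :
    PowerSeries.coeff n (φ ^ m)
      = ∑ t ∈ Finset.Nat.antidiagonalTuple m n, ∏ l, PowerSeries.coeff (t l) φ := by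
  classical
  have h1 : φ ^ m = ∏ _j ∈ (Finset.univ : Finset (Fin m)), φ := by
    rw [Finset.prod_const, Finset.card_univ, Fintype.card_fin]
  rw [h1, PowerSeries.coeff_prod]
  refine Finset.sum_nbij' (fun l => (l : Fin m → ℕ)) (fun t => Finsupp.equivFunOnFinite.symm t)
    ?_ ?_ ?_ ?_ ?_
  · intro l hl
    rw [Finset.mem_finsuppAntidiag] at hl
    rw [Finset.Nat.mem_antidiagonalTuple]
    simpa [Finsupp.sum_fintype] using hl.1
  · intro t ht
    rw [Finset.Nat.mem_antidiagonalTuple] at ht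
    rw [Finset.mem_finsuppAntidiag]
    constructor
    · simpa using ht
    · exact Finset.subset_univ _
  · intro l _; exact Finsupp.equivFunOnFinite.symm_apply_apply l
  · intro t _; rfl
  · intro l _; rfl

/-- coefficients below `j` vanish -/
def GoodPS (j : ℕ) (F : PowerSeries (PowerSeries R)) : Prop :=
  ∀ k d, d < j → PowerSeries.coeff d (PowerSeries.coeff k F) = 0

lemma GoodPS.mul {j i : ℕ} {F G : PowerSeries (PowerSeries R)} (hF : GoodPS j F)
    (hG : GoodPS i G) : GoodPS (j + i) (F * G) := by
  intro k d hd
  rw [PowerSeries.coeff_mul, map_sum]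
  refine Finset.sum_eq_zero fun p _ => ?_
  rw [PowerSeries.coeff_mul]
  refine Finset.sum_eq_zero fun q hq => ?_
  rw [Finset.HasAntidiagonal.mem_antidiagonal] at hq
  rcases lt_or_ge q.1 j with h | h
  · rw [hF _ _ h, zero_mul]
  · rw [hG p.2 q.2 (by omega), mul_zero]

lemma GoodPS.mul_left {i : ℕ} (F : PowerSeries (PowerSeries R))
    {G : PowerSeries (PowerSeries R)} (hG : GoodPS i G) : GoodPS i (F * G) := by
  intro k d hd
  rw [PowerSeries.coeff_mul, map_sum]
  refine Finset.sum_eq_zero fun p _ => ?_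
  rw [PowerSeries.coeff_mul]
  refine Finset.sum_eq_zero fun q hq => ?_
  rw [Finset.HasAntidiagonal.mem_antidiagonal] at hq
  rw [hG p.2 q.2 (by omega), mul_zero]

lemma GoodPS.pow {j : ℕ} {F : PowerSeries (PowerSeries R)} (hF : GoodPS j F) (m : ℕ) :
    GoodPS (j * m) (F ^ m) := by
  induction m with
  | zero => intro k d hd; omega
  | succ m ih =>
    have h2 := ih.mul hF
    rw [pow_succ]
    rw [Nat.mul_succ]
    exact h2

lemma coeff_eq_zero_of_constantCoeff_eq_zero {α : PowerSeries R}
    (hα : PowerSeries.constantCoeff α = 0) {p d : ℕ} (hd : d < p) (β : PowerSeries R) :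
    PowerSeries.coeff d (α ^ p * β) = 0 := by
  have hdvd : (PowerSeries.X : PowerSeries R) ^ p ∣ α ^ p * β :=
    Dvd.dvd.mul_right (pow_dvd_pow_of_dvd (PowerSeries.X_dvd_iff.mpr hα) p) β
  exact (PowerSeries.X_pow_dvd_iff.mp hdvd) d hd

lemma coeff_pow_eq_zero_of_constantCoeff_eq_zero {α : PowerSeries R}
    (hα : PowerSeries.constantCoeff α = 0) {p d : ℕ} (hd : d < p) :
    PowerSeries.coeff d (α ^ p) = 0 := by
  have := coeff_eq_zero_of_constantCoeff_eq_zero hα hd (1 : PowerSeries R)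
  rwa [mul_one] at this

end PS

section ExpDiv

lemma coeff_mul_pow_eq_zero {α β : PowerSeries K} (hα : PowerSeries.constantCoeff α = 0)
    (hβ : PowerSeries.constantCoeff β = 0) {p q m : ℕ} (h : m < p + q) :
    PowerSeries.coeff m (α ^ p * β ^ q) = 0 := by
  have hdvd : (PowerSeries.X : PowerSeries K) ^ (p + q) ∣ α ^ p * β ^ q := by
    rw [pow_add]
    exact mul_dvd_mul (pow_dvd_pow_of_dvd (PowerSeries.X_dvd_iff.mpr hα) p)
      (pow_dvd_pow_of_dvd (PowerSeries.X_dvd_iff.mpr hβ) q)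
  exact (PowerSeries.X_pow_dvd_iff.mp hdvd) m h

lemma fact_inv_choose [CharZero K] {p s : ℕ} (h : p ≤ s) :
    ((s.factorial : K))⁻¹ * (s.choose p : K)
      = ((p.factorial : K))⁻¹ * (((s - p).factorial : K))⁻¹ := by
  have key : (s.choose p) * (p.factorial * (s - p).factorial) = s.factorial := by
    rw [← mul_assoc]; exact Nat.choose_mul_factorial_mul_factorial h
  have key2 : ((s.choose p : K)) * ((p.factorial : K) * ((s - p).factorial : K))
      = (s.factorial : K) := by exact_mod_cast congrArg (Nat.cast : ℕ → K) key
  have h1 : (p.factorial : K) ≠ 0 := Nat.cast_ne_zero.mpr p.factorial_ne_zero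
  have h2 : (((s - p).factorial : K)) ≠ 0 := Nat.cast_ne_zero.mpr (s - p).factorial_ne_zero
  have h3 : ((s.factorial : K)) ≠ 0 := Nat.cast_ne_zero.mpr s.factorial_ne_zero
  field_simp
  linear_combination key2

lemma coeff_expDiv_extend {α : PowerSeries K} (hα : PowerSeries.constantCoeff α = 0)
    {c m : ℕ} (hc : c ≤ m) :
    PowerSeries.coeff c (expDiv K α) = ∑ p ∈ Finset.range (m + 1),
      (RatFunc.X : RatFunc K)⁻¹ ^ p *
        RatFunc.C ((Nat.factorial p : K)⁻¹ * PowerSeries.coeff c (α ^ p)) := by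
  rw [expDiv, PowerSeries.coeff_mk]
  refine Finset.sum_subset (by intro x hx; simp only [Finset.mem_range] at *; omega) ?_
  intro p _ hp
  simp only [Finset.mem_range, not_lt] at hp
  rw [coeff_pow_eq_zero_of_constantCoeff_eq_zero hα (by omega), mul_zero, map_zero, mul_zero]

lemma sum_triangle_swap {M : Type*} [AddCommMonoid M] (m : ℕ) (g : ℕ → ℕ → M) :
    ∑ s ∈ Finset.range (m + 1), ∑ p ∈ Finset.range (s + 1), g p (s - p)
      = ∑ p ∈ Finset.range (m + 1), ∑ q ∈ Finset.range (m + 1 - p), g p q := by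
  rw [Finset.sum_sigma', Finset.sum_sigma']
  refine Finset.sum_nbij' (fun x => ⟨x.2, x.1 - x.2⟩) (fun y => ⟨y.1 + y.2, y.1⟩)
    ?_ ?_ ?_ ?_ ?_
  · rintro ⟨s, p⟩ hx
    simp only [Finset.mem_sigma, Finset.mem_range] at *
    omega
  · rintro ⟨p, q⟩ hy
    simp only [Finset.mem_sigma, Finset.mem_range] at *
    omega
  · rintro ⟨s, p⟩ hx
    simp only [Finset.mem_sigma, Finset.mem_range] at hx
    simp only [Sigma.mk.inj_iff]
    exact ⟨by omega, heq_of_eq rfl⟩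
  · rintro ⟨p, q⟩ hy
    simp only [Finset.mem_sigma, Finset.mem_range] at hy
    simp only [Sigma.mk.inj_iff]
    exact ⟨by trivial, heq_of_eq (by omega)⟩
  · rintro ⟨s, p⟩ _
    rfl

lemma expDiv_mul [CharZero K] (α β : PowerSeries K) (hα : PowerSeries.constantCoeff α = 0)
    (hβ : PowerSeries.constantCoeff β = 0) :
    expDiv K α * expDiv K β = expDiv K (α + β) := by
  classical
  ext m
  set g : ℕ → ℕ → RatFunc K := fun p q => (RatFunc.X : RatFunc K)⁻¹ ^ (p + q) *
    RatFunc.C (((p.factorial : K) * (q.factorial : K))⁻¹ * PowerSeries.coeff m (α ^ p * β ^ q))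
    with hg
  have hgzero : ∀ p q, m < p + q → g p q = 0 := by
    intro p q h
    rw [hg]
    simp only
    rw [coeff_mul_pow_eq_zero hα hβ h, mul_zero, map_zero, mul_zero]
  -- LHS
  have hL : PowerSeries.coeff m (expDiv K α * expDiv K β)
      = ∑ p ∈ Finset.range (m + 1), ∑ q ∈ Finset.range (m + 1), g p q := by
    rw [PowerSeries.coeff_mul]
    have step1 : ∀ c ∈ Finset.HasAntidiagonal.antidiagonal m,
        PowerSeries.coeff c.1 (expDiv K α) *
          PowerSeries.coeff c.2 (expDiv K β)
        = ∑ p ∈ Finset.range (m + 1), ∑ q ∈ Finset.range (m + 1),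
            ((RatFunc.X : RatFunc K)⁻¹ ^ (p + q) *
              RatFunc.C (((p.factorial : K) * (q.factorial : K))⁻¹ *
                (PowerSeries.coeff c.1 (α ^ p) * PowerSeries.coeff c.2 (β ^ q)))) := by
      intro c hc
      rw [Finset.HasAntidiagonal.mem_antidiagonal] at hc
      rw [coeff_expDiv_extend hα (show c.1 ≤ m by omega),
        coeff_expDiv_extend hβ (show c.2 ≤ m by omega), Finset.sum_mul_sum]
      refine Finset.sum_congr rfl fun p _ => Finset.sum_congr rfl fun q _ => ?_
      rw [pow_add, mul_mul_mul_comm, ← map_mul, mul_inv]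
      congr 2
      ring
    rw [Finset.sum_congr rfl step1, Finset.sum_comm]
    refine Finset.sum_congr rfl fun p _ => ?_
    rw [Finset.sum_comm]
    refine Finset.sum_congr rfl fun q _ => ?_
    rw [hg]
    simp only
    rw [PowerSeries.coeff_mul, Finset.mul_sum, map_sum, Finset.mul_sum]
  rw [hL]
  -- RHS
  have hR : PowerSeries.coeff m (expDiv K (α + β))
      = ∑ s ∈ Finset.range (m + 1), ∑ p ∈ Finset.range (s + 1), g p (s - p) := by
    rw [expDiv, PowerSeries.coeff_mk]
    refine Finset.sum_congr rfl fun s hs => ?_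
    rw [add_pow, map_sum, Finset.mul_sum, map_sum, Finset.mul_sum]
    refine Finset.sum_congr rfl fun p hp => ?_
    rw [Finset.mem_range] at hp
    rw [hg]
    simp only
    have hps : p + (s - p) = s := by omega
    rw [hps]
    have hC : ((s.choose p : ℕ) : PowerSeries K) = PowerSeries.C ((s.choose p : ℕ) : K) := by
      rw [map_natCast]
    rw [hC, PowerSeries.coeff_mul_C]
    congr 2
    have hkey := fact_inv_choose (K := K) (show p ≤ s by omega)
    rw [mul_inv]
    linear_combination (PowerSeries.coeff m (α ^ p * β ^ (s - p))) * hkey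
  rw [hR, sum_triangle_swap]
  refine Finset.sum_congr rfl fun p hp => ?_
  rw [Finset.mem_range] at hp
  refine (Finset.sum_subset (by intro q hq; rw [Finset.mem_range] at *; omega) ?_).symm
  intro q hq1 hq2
  rw [Finset.mem_range] at hq1 hq2
  exact hgzero p q (by omega)

end ExpDiv

section Machinery
variable [CharZero K]

lemma expDiv_zero : expDiv K (0 : PowerSeries K) = 1 := by
  ext m
  rw [expDiv, PowerSeries.coeff_mk, PowerSeries.coeff_one]
  rw [Finset.sum_eq_single 0]
  · simp
  · intro p _ hp
    rw [zero_pow hp, map_zero, mul_zero, map_zero, mul_zero]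
  · intro h
    simp at h

variable {η : PowerSeries K}

/-- Evaluation of `F ∈ K[[u]][[x]]` at `x = η`. -/
def evalAt (η : PowerSeries K) (F : PowerSeries (PowerSeries K)) : PowerSeries K :=
  PowerSeries.mk fun d => ∑ k ∈ Finset.range (d + 1),
    PowerSeries.coeff d (PowerSeries.coeff k F * η ^ k)

lemma evalAt_add (F G : PowerSeries (PowerSeries K)) :
    evalAt η (F + G) = evalAt η F + evalAt η G := by
  ext d
  simp [evalAt, add_mul, Finset.sum_add_distrib]

lemma evalAt_C (c : PowerSeries K) : evalAt η (PowerSeries.C c) = c := by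
  ext d
  rw [evalAt, PowerSeries.coeff_mk, Finset.sum_eq_single 0]
  · simp
  · intro k _ hk
    rw [PowerSeries.coeff_C, if_neg hk, zero_mul, map_zero]
  · intro h
    simp at h

lemma evalAt_sub (F G : PowerSeries (PowerSeries K)) :
    evalAt η (F - G) = evalAt η F - evalAt η G := by
  ext d
  simp [evalAt, sub_mul, Finset.sum_sub_distrib]

lemma evalAt_X_pow (hη : PowerSeries.constantCoeff η = 0) (a : ℕ) :
    evalAt η ((PowerSeries.X : PowerSeries (PowerSeries K)) ^ a) = η ^ a := by
  ext d
  rw [evalAt, PowerSeries.coeff_mk]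
  by_cases ha : a ≤ d
  · rw [Finset.sum_eq_single a]
    · rw [PowerSeries.coeff_X_pow, if_pos rfl, one_mul]
    · intro k _ hk
      rw [PowerSeries.coeff_X_pow, if_neg hk, zero_mul, map_zero]
    · intro h
      exfalso
      exact h (Finset.mem_range.mpr (by omega))
  · rw [Finset.sum_eq_zero, coeff_pow_eq_zero_of_constantCoeff_eq_zero hη (by omega)]
    intro k hk
    rw [Finset.mem_range] at hk
    rw [PowerSeries.coeff_X_pow, if_neg (by omega), zero_mul, map_zero]

/-- Explicit division by `x - η` of a series vanishing at `x = η`. -/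
def qdiv (η : PowerSeries K) (F : PowerSeries (PowerSeries K)) :
    PowerSeries (PowerSeries K) :=
  PowerSeries.mk fun k => PowerSeries.mk fun d => ∑ j ∈ Finset.range (d + 1),
    PowerSeries.coeff d (PowerSeries.coeff (k + 1 + j) F * η ^ j)

lemma coeff_mul_eta_pow_eq_zero (hη : PowerSeries.constantCoeff η = 0)
    {j d : ℕ} (hd : d < j) (β : PowerSeries K) :
    PowerSeries.coeff d (β * η ^ j) = 0 := by
  rw [mul_comm]
  exact coeff_eq_zero_of_constantCoeff_eq_zero hη hd β

lemma coeff_qdiv_mul_eta (hη : PowerSeries.constantCoeff η = 0)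
    (F : PowerSeries (PowerSeries K)) (k d : ℕ) :
    PowerSeries.coeff d (η * PowerSeries.coeff k (qdiv η F))
      = ∑ j ∈ Finset.range (d + 1),
          PowerSeries.coeff d (PowerSeries.coeff (k + 1 + j) F * η ^ (j + 1)) := by
  rw [PowerSeries.coeff_mul]
  have step : ∀ c ∈ Finset.HasAntidiagonal.antidiagonal d,
      PowerSeries.coeff c.1 η * PowerSeries.coeff c.2 (PowerSeries.coeff k (qdiv η F))
        = ∑ j ∈ Finset.range (d + 1), PowerSeries.coeff c.1 η *
            PowerSeries.coeff c.2 (PowerSeries.coeff (k + 1 + j) F * η ^ j) := by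
    intro c hc
    rw [Finset.HasAntidiagonal.mem_antidiagonal] at hc
    rw [qdiv, PowerSeries.coeff_mk, PowerSeries.coeff_mk, Finset.mul_sum]
    refine Finset.sum_subset (by intro x hx; rw [Finset.mem_range] at *; omega) ?_
    intro j _ hj
    rw [Finset.mem_range, not_lt] at hj
    rw [coeff_mul_eta_pow_eq_zero hη (by omega), mul_zero]
  rw [Finset.sum_congr rfl step, Finset.sum_comm]
  refine Finset.sum_congr rfl fun j _ => ?_
  rw [pow_succ, ← mul_assoc]
  rw [show PowerSeries.coeff (k + 1 + j) F * η ^ j * η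
      = η * (PowerSeries.coeff (k + 1 + j) F * η ^ j) by ring, PowerSeries.coeff_mul]

lemma qdiv_spec (hη : PowerSeries.constantCoeff η = 0) (F : PowerSeries (PowerSeries K))
    (hF : evalAt η F = 0) :
    F = (PowerSeries.X - PowerSeries.C η) * qdiv η F := by
  ext k d
  have hx : PowerSeries.coeff k ((PowerSeries.X - PowerSeries.C η) * qdiv η F)
      = PowerSeries.coeff k (PowerSeries.X * qdiv η F)
        - η * PowerSeries.coeff k (qdiv η F) := by
    rw [sub_mul, map_sub, PowerSeries.coeff_C_mul]
  rw [hx, map_sub]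
  rcases Nat.eq_zero_or_pos k with hk | hk
  · subst hk
    rw [PowerSeries.coeff_zero_X_mul, map_zero, zero_sub, coeff_qdiv_mul_eta hη]
    have key : ∀ j ∈ Finset.range (d + 1),
        PowerSeries.coeff d (PowerSeries.coeff (0 + 1 + j) F * η ^ (j + 1))
          = PowerSeries.coeff d (PowerSeries.coeff (j + 1) F * η ^ (j + 1)) := by
      intro j _
      rw [show 0 + 1 + j = j + 1 from by omega]
    rw [Finset.sum_congr rfl key]
    have h3 := congrArg (PowerSeries.coeff d) hF
    rw [evalAt, PowerSeries.coeff_mk, map_zero] at h3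
    have h2 : ∑ j ∈ Finset.range (d + 1 + 1),
        PowerSeries.coeff d (PowerSeries.coeff j F * η ^ j) = 0 := by
      rw [Finset.sum_range_succ, coeff_mul_eta_pow_eq_zero hη (by omega), add_zero]
      exact h3
    rw [Finset.sum_range_succ'] at h2
    simp only [pow_zero, mul_one] at h2
    exact eq_neg_of_add_eq_zero_right h2
  · obtain ⟨k', rfl⟩ : ∃ k', k = k' + 1 := ⟨k - 1, by omega⟩
    rw [PowerSeries.coeff_succ_X_mul, coeff_qdiv_mul_eta hη]
    rw [qdiv, PowerSeries.coeff_mk, PowerSeries.coeff_mk]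
    have hS1 : ∑ j ∈ Finset.range (d + 1 + 1),
        PowerSeries.coeff d (PowerSeries.coeff (k' + 1 + j) F * η ^ j)
        = ∑ j ∈ Finset.range (d + 1),
            PowerSeries.coeff d (PowerSeries.coeff (k' + 1 + j) F * η ^ j) := by
      rw [Finset.sum_range_succ, coeff_mul_eta_pow_eq_zero hη (by omega), add_zero]
    rw [← hS1, Finset.sum_range_succ']
    have key : ∀ j ∈ Finset.range (d + 1),
        PowerSeries.coeff d (PowerSeries.coeff (k' + 1 + (j + 1)) F * η ^ (j + 1))
          = PowerSeries.coeff d (PowerSeries.coeff (k' + 1 + 1 + j) F * η ^ (j + 1)) := by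
      intro j _
      rw [show k' + 1 + (j + 1) = k' + 1 + 1 + j from by omega]
    rw [Finset.sum_congr rfl key]
    simp only [pow_zero, mul_one, Nat.add_zero]
    ring

end Machinery

section LLSec
variable [CharZero K] {η : PowerSeries K}

/-- `L(F) = ∑ₘ [x^m](F f^m)`, u-adically truncated. -/
def LL (f F : PowerSeries (PowerSeries K)) : PowerSeries K :=
  PowerSeries.mk fun d => ∑ m ∈ Finset.range (d + 1),
    PowerSeries.coeff d (PowerSeries.coeff m (F * f ^ m))

lemma GoodPS.pow' {f : PowerSeries (PowerSeries K)} (hf : GoodPS 1 f) (m : ℕ) :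
    GoodPS m (f ^ m) := by
  have := hf.pow m
  rwa [one_mul] at this

lemma LL_add (f F G : PowerSeries (PowerSeries K)) :
    LL f (F + G) = LL f F + LL f G := by
  ext d
  simp [LL, add_mul, Finset.sum_add_distrib]

lemma LL_C_mul {f : PowerSeries (PowerSeries K)} (hf : GoodPS 1 f) (c : PowerSeries K)
    (F : PowerSeries (PowerSeries K)) :
    LL f (PowerSeries.C c * F) = c * LL f F := by
  ext d
  rw [LL, PowerSeries.coeff_mk, PowerSeries.coeff_mul]
  have step : ∀ p ∈ Finset.HasAntidiagonal.antidiagonal d,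
      PowerSeries.coeff p.1 c * PowerSeries.coeff p.2 (LL f F)
        = ∑ m ∈ Finset.range (d + 1), PowerSeries.coeff p.1 c *
            PowerSeries.coeff p.2 (PowerSeries.coeff m (F * f ^ m)) := by
    intro p hp
    rw [Finset.HasAntidiagonal.mem_antidiagonal] at hp
    rw [LL, PowerSeries.coeff_mk, Finset.mul_sum]
    refine Finset.sum_subset (by intro x hx; rw [Finset.mem_range] at *; omega) ?_
    intro m _ hm
    rw [Finset.mem_range, not_lt] at hm
    rw [GoodPS.mul_left F (hf.pow' m) m p.2 (by omega), mul_zero]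
  rw [Finset.sum_congr rfl step, Finset.sum_comm]
  refine Finset.sum_congr rfl fun m _ => ?_
  rw [mul_assoc, PowerSeries.coeff_C_mul, PowerSeries.coeff_mul]

lemma LL_telescope {f : PowerSeries (PowerSeries K)} (hf : GoodPS 1 f)
    (F : PowerSeries (PowerSeries K)) :
    LL f (F * (PowerSeries.X - f)) = 0 := by
  ext d
  rw [LL, PowerSeries.coeff_mk, map_zero]
  have step : ∀ m, F * (PowerSeries.X - f) * f ^ m
      = PowerSeries.X * (F * f ^ m) - F * f ^ (m + 1) := by
    intro m
    ring
  have step2 : ∀ m ∈ Finset.range (d + 1),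
      PowerSeries.coeff d (PowerSeries.coeff m (F * (PowerSeries.X - f) * f ^ m))
        = PowerSeries.coeff d (PowerSeries.coeff m (PowerSeries.X * (F * f ^ m)))
          - PowerSeries.coeff d (PowerSeries.coeff m (F * f ^ (m + 1))) := by
    intro m _
    rw [step, map_sub, map_sub]
  rw [Finset.sum_congr rfl step2, Finset.sum_sub_distrib]
  have hfirst : ∑ m ∈ Finset.range (d + 1),
      PowerSeries.coeff d (PowerSeries.coeff m (PowerSeries.X * (F * f ^ m)))
      = ∑ m ∈ Finset.range d,
          PowerSeries.coeff d (PowerSeries.coeff m (F * f ^ (m + 1))) := by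
    rw [Finset.sum_range_succ']
    rw [PowerSeries.coeff_zero_X_mul, map_zero, add_zero]
    refine Finset.sum_congr rfl fun m _ => ?_
    rw [PowerSeries.coeff_succ_X_mul]
  have hsecond : ∑ m ∈ Finset.range (d + 1),
      PowerSeries.coeff d (PowerSeries.coeff m (F * f ^ (m + 1)))
      = ∑ m ∈ Finset.range d,
          PowerSeries.coeff d (PowerSeries.coeff m (F * f ^ (m + 1)))
        + PowerSeries.coeff d (PowerSeries.coeff d (F * f ^ (d + 1))) := by
    rw [Finset.sum_range_succ]
  rw [hfirst, hsecond, GoodPS.mul_left F (hf.pow' (d + 1)) d d (by omega)]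
  ring

lemma LL_one_eq {f : PowerSeries (PowerSeries K)} (hf : GoodPS 1 f) :
    LL f 1 = 1 + LL f (PowerSeries.derivative (PowerSeries K) f) := by
  have hf' : GoodPS 1 (PowerSeries.derivative (PowerSeries K) f) := by
    intro k d hd
    interval_cases d
    rw [PowerSeries.coeff_derivative, PowerSeries.coeff_zero_eq_constantCoeff, map_mul]
    have h0 := hf (k + 1) 0 (by omega)
    rw [PowerSeries.coeff_zero_eq_constantCoeff] at h0
    rw [h0, zero_mul]
  ext d
  rw [map_add, LL, LL, PowerSeries.coeff_mk, PowerSeries.coeff_mk]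
  have key : ∀ m : ℕ, PowerSeries.coeff (m + 1) (f ^ (m + 1))
      = PowerSeries.coeff m (PowerSeries.derivative (PowerSeries K) f * f ^ m) := by
    intro m
    have hcast : ((m : PowerSeries K) + 1) ≠ 0 := by
      intro hcc
      have h5 := congrArg (PowerSeries.constantCoeff) hcc
      rw [map_add, map_natCast, map_one, map_zero] at h5
      exact_mod_cast Nat.cast_ne_zero (R := K).mpr (Nat.succ_ne_zero m) (by exact_mod_cast h5)
    apply mul_right_cancel₀ hcast
    have hD : ∀ g h : PowerSeries (PowerSeries K), PowerSeries.derivative (PowerSeries K) (g * h)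
        = g * PowerSeries.derivative (PowerSeries K) h
          + h * PowerSeries.derivative (PowerSeries K) g := by
      intro g h
      have h4 := PowerSeries.derivativeFun_mul g h
      have h5 : ∀ x : PowerSeries (PowerSeries K),
          PowerSeries.derivative (PowerSeries K) x = PowerSeries.derivativeFun x := fun _ => rfl
      rw [h5, h5, h5, h4, smul_eq_mul, smul_eq_mul]
    have hpow : ∀ n : ℕ, PowerSeries.derivative (PowerSeries K) (f ^ (n + 1))
        = ((n : PowerSeries (PowerSeries K)) + 1)
            * (PowerSeries.derivative (PowerSeries K) f * f ^ n) := by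
      intro n
      induction n with
      | zero => simp
      | succ n ih =>
        rw [pow_succ, hD, ih]
        push_cast
        ring
    have h1 := PowerSeries.coeff_derivative (f ^ (m + 1)) m
    rw [hpow m] at h1
    have hC : ((m : PowerSeries (PowerSeries K)) + 1)
        = PowerSeries.C ((m : PowerSeries K) + 1) := by
      rw [map_add, map_natCast, map_one]
    rw [hC, PowerSeries.coeff_C_mul] at h1
    linear_combination -h1
  have hL : ∑ m ∈ Finset.range (d + 1),
      PowerSeries.coeff d (PowerSeries.coeff m ((1 : PowerSeries (PowerSeries K)) * f ^ m))
      = ∑ m ∈ Finset.range d, PowerSeries.coeff d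
          (PowerSeries.coeff (m + 1) (f ^ (m + 1))) + PowerSeries.coeff d (1 : PowerSeries K) := by
    rw [Finset.sum_range_succ']
    congr 1
    · refine Finset.sum_congr rfl fun m _ => ?_
      rw [one_mul]
    · rw [one_mul, pow_zero]
      congr 1
      rw [PowerSeries.coeff_zero_eq_constantCoeff, map_one]
  rw [hL]
  have hR : ∑ m ∈ Finset.range (d + 1), PowerSeries.coeff d (PowerSeries.coeff m
        (PowerSeries.derivative (PowerSeries K) f * f ^ m))
      = ∑ m ∈ Finset.range d, PowerSeries.coeff d (PowerSeries.coeff m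
          (PowerSeries.derivative (PowerSeries K) f * f ^ m)) := by
    rw [Finset.sum_range_succ]
    rw [(hf'.mul (hf.pow' d)) d d (by omega), add_zero]
  rw [hR]
  have hmatch : ∀ m ∈ Finset.range d, PowerSeries.coeff d
        (PowerSeries.coeff (m + 1) (f ^ (m + 1)))
      = PowerSeries.coeff d (PowerSeries.coeff m
          (PowerSeries.derivative (PowerSeries K) f * f ^ m)) := by
    intro m _
    rw [key m]
  rw [Finset.sum_congr rfl hmatch]
  ring

end LLSec

section Specific
variable [CharZero K]
variable (Z : PowerSeries (RatFunc K)) (η : PowerSeries K) (W : PowerSeries (RatFunc K))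

/-- `Res_{ℏ=0}(ℏ^{-b} Z)` -/
def Rn (b : ℕ) : PowerSeries K :=
  PowerSeries.mk fun d =>
    lcoeff K (-1) ((RatFunc.X : RatFunc K)⁻¹ ^ b * PowerSeries.coeff d Z)

/-- the series `f(x) = ∑ (-1)^b/b! Rn(b) x^b` -/
def fser : PowerSeries (PowerSeries K) :=
  PowerSeries.mk fun b => ((-1 : K) ^ b * (Nat.factorial b : K)⁻¹) • Rn Z b

lemma coeff_Rn (b d : ℕ) :
    PowerSeries.coeff d (Rn Z b) = lcoeff K (-1 + b) (PowerSeries.coeff d Z) := by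
  rw [Rn, PowerSeries.coeff_mk, lcoeff_X_inv_pow_mul]

lemma fser_good (hZ : PowerSeries.constantCoeff Z = 0) : GoodPS 1 (fser Z) := by
  intro k d hd
  interval_cases d
  rw [fser, PowerSeries.coeff_mk, map_smul, coeff_Rn, smul_eq_mul,
    PowerSeries.coeff_zero_eq_constantCoeff, hZ]
  have : lcoeff K (-1 + (k:ℤ)) 0 = 0 := map_zero (lcoeffHom _)
  rw [this, mul_zero]

lemma sum_antidiag_swap {M : Type*} [AddCommMonoid M] (n : ℕ) (f : ℕ → ℕ → M) :
    ∑ c ∈ Finset.HasAntidiagonal.antidiagonal n, f c.1 c.2 = ∑ c ∈ Finset.HasAntidiagonal.antidiagonal n, f c.2 c.1 := by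
  conv_rhs => rw [← Finset.HasAntidiagonal.map_swap_antidiagonal]
  rw [Finset.sum_map]
  rfl

lemma neg_one_pow_C (k : ℕ) :
    ((-1 : PowerSeries K) ^ k) = PowerSeries.C ((-1 : K) ^ k) := by
  rw [map_pow, map_neg, map_one]

lemma coeff_neg_eta_pow (c k : ℕ) :
    PowerSeries.coeff c ((-η) ^ k) = (-1 : K) ^ k * PowerSeries.coeff c (η ^ k) := by
  rw [neg_pow, neg_one_pow_C, PowerSeries.coeff_C_mul]

lemma lcoeff_coeff_psi_mul (hη : PowerSeries.constantCoeff η = 0) (j : ℤ) (d : ℕ) :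
    lcoeff K j (PowerSeries.coeff d (expDiv K (-η) * Z))
      = ∑ c ∈ Finset.HasAntidiagonal.antidiagonal d, ∑ k ∈ Finset.range (d + 1),
          ((-1 : K) ^ k * (Nat.factorial k : K)⁻¹) *
            (PowerSeries.coeff c.1 (η ^ k) * lcoeff K (j + k) (PowerSeries.coeff c.2 Z)) := by
  rw [PowerSeries.coeff_mul, lcoeff_sum]
  refine Finset.sum_congr rfl fun c hc => ?_
  rw [Finset.HasAntidiagonal.mem_antidiagonal] at hc
  rw [coeff_expDiv_extend (by rw [map_neg, hη, neg_zero]) (show c.1 ≤ d by omega),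
    Finset.sum_mul, lcoeff_sum]
  refine Finset.sum_congr rfl fun k _ => ?_
  rw [lcoeff_X_inv_pow_C_mul, coeff_neg_eta_pow]
  ring

lemma evalAt_fser (hη : PowerSeries.constantCoeff η = 0) :
    evalAt η (fser Z) = PowerSeries.mk fun d =>
      lcoeff K (-1) (PowerSeries.coeff d (expDiv K (-η) * Z)) := by
  ext d
  rw [evalAt, PowerSeries.coeff_mk, PowerSeries.coeff_mk, lcoeff_coeff_psi_mul Z η hη]
  have step : ∀ k ∈ Finset.range (d + 1),
      PowerSeries.coeff d (PowerSeries.coeff k (fser Z) * η ^ k)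
        = ∑ c ∈ Finset.HasAntidiagonal.antidiagonal d,
            ((-1 : K) ^ k * (Nat.factorial k : K)⁻¹) *
              (PowerSeries.coeff c.1 (η ^ k) * lcoeff K (-1 + k) (PowerSeries.coeff c.2 Z)) := by
    intro k _
    rw [PowerSeries.coeff_mul]
    rw [sum_antidiag_swap d (fun x y => PowerSeries.coeff x (PowerSeries.coeff k (fser Z)) *
      PowerSeries.coeff y (η ^ k))]
    refine Finset.sum_congr rfl fun c _ => ?_
    rw [fser, PowerSeries.coeff_mk, map_smul, coeff_Rn, smul_eq_mul]
    ring
  rw [Finset.sum_congr rfl step, Finset.sum_comm]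

lemma PsiZ (hη : PowerSeries.constantCoeff η = 0)
    (h : 1 + Z = expDiv K η * (1 + W)) :
    expDiv K (-η) * Z = (1 + W) - expDiv K (-η) := by
  have h1 : expDiv K (-η) * (1 + Z) = expDiv K (-η) * (expDiv K η * (1 + W)) := by rw [← h]
  rw [← mul_assoc, expDiv_mul (-η) η (by rw [map_neg, hη, neg_zero]) hη, neg_add_cancel,
    expDiv_zero, one_mul] at h1
  linear_combination h1

lemma lcoeff_psi (hη : PowerSeries.constantCoeff η = 0) (j : ℤ) (p0 : ℕ) (hj : j + p0 = 0)
    (d : ℕ) (h0 : p0 ≤ d ∨ PowerSeries.coeff d (η ^ p0) = 0) :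
    lcoeff K j (PowerSeries.coeff d (expDiv K (-η)))
      = (-1 : K) ^ p0 * (Nat.factorial p0 : K)⁻¹ * PowerSeries.coeff d (η ^ p0) := by
  rw [expDiv, PowerSeries.coeff_mk, lcoeff_sum]
  rw [Finset.sum_eq_single p0]
  · rw [lcoeff_X_inv_pow_C, if_pos hj, coeff_neg_eta_pow]
    ring
  · intro p _ hp
    rw [lcoeff_X_inv_pow_C, if_neg (by omega)]
  · intro hnot
    rw [Finset.mem_range, not_lt] at hnot
    rcases h0 with h0 | h0
    · omega
    · rw [lcoeff_X_inv_pow_C, if_pos hj, coeff_neg_eta_pow, h0]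
      ring

lemma evalAt_fser_eq (hη : PowerSeries.constantCoeff η = 0)
    (hW : RegularAtZero K W) (h : 1 + Z = expDiv K η * (1 + W)) :
    evalAt η (fser Z) = η := by
  rw [evalAt_fser Z η hη]
  ext d
  rw [PowerSeries.coeff_mk, PsiZ Z η W hη h, map_sub, map_add, lcoeff_sub, lcoeff_add]
  rw [hW d (-1) (by norm_num)]
  have h1 : lcoeff K (-1) (PowerSeries.coeff d 1) = 0 := by
    rw [PowerSeries.coeff_one]
    split
    · rw [lcoeff_one, if_neg (by norm_num)]
    · exact map_zero (lcoeffHom (-1))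
  rw [h1, lcoeff_psi η hη (-1) 1 (by norm_num) d ?_]
  · rw [pow_one]
    simp [Nat.factorial]
  · rcases Nat.eq_zero_or_pos d with hd | hd
    · right
      subst hd
      rw [pow_one, PowerSeries.coeff_zero_eq_constantCoeff, hη]
    · left; omega

end Specific

section Specific2
variable [CharZero K]
variable (Z : PowerSeries (RatFunc K)) (η : PowerSeries K) (W : PowerSeries (RatFunc K))

lemma evalAt_dfser (hη : PowerSeries.constantCoeff η = 0) :
    evalAt η (PowerSeries.derivative (PowerSeries K) (fser Z))
      = -(PowerSeries.mk fun d =>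
          lcoeff K 0 (PowerSeries.coeff d (expDiv K (-η) * Z))) := by
  ext d
  rw [evalAt, PowerSeries.coeff_mk, map_neg, PowerSeries.coeff_mk,
    lcoeff_coeff_psi_mul Z η hη, ← Finset.sum_neg_distrib]
  have step : ∀ k ∈ Finset.range (d + 1),
      PowerSeries.coeff d
          (PowerSeries.coeff k (PowerSeries.derivative (PowerSeries K) (fser Z)) * η ^ k)
        = ∑ c ∈ Finset.HasAntidiagonal.antidiagonal d,
            -(((-1 : K) ^ k * (Nat.factorial k : K)⁻¹) *
              (PowerSeries.coeff c.1 (η ^ k) *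
                lcoeff K (0 + k) (PowerSeries.coeff c.2 Z))) := by
    intro k _
    rw [PowerSeries.coeff_mul]
    rw [sum_antidiag_swap d (fun x y => PowerSeries.coeff x
      (PowerSeries.coeff k (PowerSeries.derivative (PowerSeries K) (fser Z))) *
      PowerSeries.coeff y (η ^ k))]
    refine Finset.sum_congr rfl fun c _ => ?_
    rw [PowerSeries.coeff_derivative]
    have hCk : ((k : PowerSeries K) + 1) = PowerSeries.C ((k : K) + 1) := by
      rw [map_add, map_natCast, map_one]
    rw [hCk, PowerSeries.coeff_mul_C, fser, PowerSeries.coeff_mk, map_smul, coeff_Rn,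
      smul_eq_mul]
    rw [show (-1 : ℤ) + ((k + 1 : ℕ) : ℤ) = 0 + (k : ℤ) from by push_cast; ring]
    have hne : ((k : K) + 1) ≠ 0 := by
      have h5 := (Nat.cast_ne_zero (R := K)).mpr (Nat.succ_ne_zero k)
      push_cast at h5
      exact h5
    have h7 : ((Nat.factorial (k + 1) : ℕ) : K) = ((k : K) + 1) * (Nat.factorial k : K) := by
      rw [Nat.factorial_succ]
      push_cast
      ring
    have hsc : ((Nat.factorial (k + 1) : K))⁻¹ * ((k : K) + 1) = (Nat.factorial k : K)⁻¹ := by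
      rw [h7, mul_inv, mul_comm (((k : K) + 1)⁻¹), mul_assoc, inv_mul_cancel₀ hne, mul_one]
    linear_combination ((-1 : K) ^ (k + 1) *
      lcoeff K (0 + (k : ℤ)) (PowerSeries.coeff c.2 Z) *
        PowerSeries.coeff c.1 (η ^ k)) * hsc
  rw [Finset.sum_congr rfl step, Finset.sum_comm]
  refine Finset.sum_congr rfl fun c _ => ?_
  exact Finset.sum_neg_distrib _

lemma C0_eq (hη : PowerSeries.constantCoeff η = 0)
    (h : 1 + Z = expDiv K η * (1 + W)) :
    (PowerSeries.mk fun d => lcoeff K 0 (PowerSeries.coeff d (expDiv K (-η) * Z)))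
      = PowerSeries.mk fun d => lcoeff K 0 (PowerSeries.coeff d W) := by
  ext d
  rw [PowerSeries.coeff_mk, PowerSeries.coeff_mk, PsiZ Z η W hη h, map_sub, map_add,
    lcoeff_sub, lcoeff_add, lcoeff_psi η hη 0 0 (by norm_num) d (Or.inl (by omega))]
  rw [pow_zero, pow_zero, Nat.factorial_zero]
  have h1 : lcoeff K 0 (PowerSeries.coeff d 1)
      = PowerSeries.coeff d (1 : PowerSeries K) := by
    rw [PowerSeries.coeff_one, PowerSeries.coeff_one]
    split
    · rw [lcoeff_one, if_pos rfl]
    · exact map_zero (lcoeffHom 0)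
  rw [h1]
  push_cast
  ring

end Specific2

section LLfinal
variable [CharZero K] {η : PowerSeries K}

lemma LL_eq_evalAt {f : PowerSeries (PowerSeries K)} (hf : GoodPS 1 f)
    (hη : PowerSeries.constantCoeff η = 0) {g ginv : PowerSeries (PowerSeries K)}
    (hfact : PowerSeries.X - f = (PowerSeries.X - PowerSeries.C η) * g)
    (hginv : g * ginv = 1) (F : PowerSeries (PowerSeries K)) :
    LL f F = evalAt η F * LL f 1 := by
  have hzero : ∀ G : PowerSeries (PowerSeries K),
      LL f (G * (PowerSeries.X - PowerSeries.C η)) = 0 := by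
    intro G
    have h2 : ginv * g = 1 := by rw [mul_comm]; exact hginv
    have h3 : (G * ginv) * (PowerSeries.X - f) = G * (PowerSeries.X - PowerSeries.C η) := by
      rw [hfact, show (G * ginv) * ((PowerSeries.X - PowerSeries.C η) * g)
        = (ginv * g) * (G * (PowerSeries.X - PowerSeries.C η)) from by ring, h2, one_mul]
    rw [← h3, LL_telescope hf]
  have heval0 : evalAt η (F - PowerSeries.C (evalAt η F)) = 0 := by
    rw [evalAt_sub, evalAt_C, sub_self]
  have hdiv := qdiv_spec hη _ heval0
  have hFdec : F = PowerSeries.C (evalAt η F) * 1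
      + qdiv η (F - PowerSeries.C (evalAt η F)) * (PowerSeries.X - PowerSeries.C η) := by
    linear_combination hdiv
  conv_lhs => rw [hFdec]
  rw [LL_add, LL_C_mul hf, hzero, add_zero]

end LLfinal


end Aux

/-- Lemma 2.2(ii): if `Z ∈ K(ℏ)[[u]]` with no `u`-constant term is regularizable
at `ℏ = 0`, with regularizing pair `(η, W)` and `W = ∑_{q≥0} C_q(u)ℏ^q`, then for
every `a ≥ 0`,
`∑_{m=0}^∞ ∑_{a_1+⋯+a_m = m-a} ∏_{l=1}^m ((-1)^{a_l}/a_l!) Res_{ℏ=0}{ℏ^{-a_l} Z}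
 = η^a / (1 + C_0)`.
The sum over `m` is finite in each `u`-degree: each residue factor has zero
`u`-constant term, so only `m ≤ d` contributes to the `u^d`-coefficient. -/
theorem stmt13 [CharZero K] (Z : PowerSeries (RatFunc K))
    (hZ : PowerSeries.constantCoeff Z = 0)
    (η : PowerSeries K) (W : PowerSeries (RatFunc K))
    (hη : PowerSeries.constantCoeff η = 0)
    (hW0 : PowerSeries.constantCoeff W = 0)
    (hW : RegularAtZero K W)
    (h : 1 + Z = expDiv K η * (1 + W)) (a : ℕ) :
    -- `Res_{ℏ=0} {ℏ^{-b} Z}` for `b : ℕ`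
    let Rneg : ℕ → PowerSeries K := fun b =>
      PowerSeries.mk fun d =>
        lcoeff K (-1) ((RatFunc.X : RatFunc K)⁻¹ ^ b * PowerSeries.coeff d Z)
    -- `C_0`, the value of `W` at `ℏ = 0`
    let C0 : PowerSeries K :=
      PowerSeries.mk fun d => lcoeff K 0 (PowerSeries.coeff d W)
    (PowerSeries.mk fun d =>
        ∑ m ∈ Finset.range (d + 1),
          if a ≤ m then
            ∑ t ∈ Finset.Nat.antidiagonalTuple m (m - a),
              PowerSeries.coeff d
                (∏ l, ((-1 : K) ^ (t l) * (Nat.factorial (t l) : K)⁻¹) • Rneg (t l))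
          else 0)
      = η ^ a * (1 + C0)⁻¹ := by
  intro Rneg C0
  have hf : GoodPS 1 (fser Z) := fser_good Z hZ
  have hevf : evalAt η (fser Z) = η := evalAt_fser_eq Z η W hη hW h
  have hevd : evalAt η (PowerSeries.derivative (PowerSeries K) (fser Z)) = -C0 := by
    have h1 := evalAt_dfser Z η hη
    rw [C0_eq Z η W hη h] at h1
    exact h1
  have hXf : evalAt η (PowerSeries.X - fser Z) = 0 := by
    have h1 : evalAt η (PowerSeries.X : PowerSeries (PowerSeries K)) = η := by
      have h2 := evalAt_X_pow (η := η) hη 1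
      rwa [pow_one, pow_one] at h2
    rw [evalAt_sub, h1, hevf, sub_self]
  have hfact := qdiv_spec hη _ hXf
  set g := qdiv η (PowerSeries.X - fser Z) with hg
  have hg0 : PowerSeries.constantCoeff g
      = PowerSeries.mk fun d => ∑ j ∈ Finset.range (d + 1),
          PowerSeries.coeff d
            (PowerSeries.coeff (0 + 1 + j) (PowerSeries.X - fser Z) * η ^ j) := by
    rw [hg, qdiv, ← PowerSeries.coeff_zero_eq_constantCoeff_apply, PowerSeries.coeff_mk]
  have hg00 : PowerSeries.constantCoeff
      (PowerSeries.constantCoeff g) = 1 := by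
    rw [hg0, ← PowerSeries.coeff_zero_eq_constantCoeff_apply, PowerSeries.coeff_mk,
      Finset.sum_range_one, pow_zero, mul_one]
    have h1 : PowerSeries.coeff (0 + 1 + 0) (PowerSeries.X - fser Z)
        = 1 - PowerSeries.coeff 1 (fser Z) := by
      rw [map_sub]
      congr 1
      exact PowerSeries.coeff_one_X
    rw [h1, map_sub]
    have h2 := hf 1 0 (by omega)
    rw [h2]
    simp
  have hgne : PowerSeries.constantCoeff
      (PowerSeries.constantCoeff g) ≠ 0 := by
    rw [hg00]; exact one_ne_zero
  set g0 : PowerSeries K := PowerSeries.constantCoeff g with hg0def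
  have hu1 : g0 * g0⁻¹ = 1 := PowerSeries.mul_inv_cancel _ hgne
  have hu2 : g0⁻¹ * g0 = 1 := PowerSeries.inv_mul_cancel _ hgne
  set u : (PowerSeries K)ˣ := ⟨g0, g0⁻¹, hu1, hu2⟩ with hu
  have hginv : g * PowerSeries.invOfUnit g u = 1 :=
    PowerSeries.mul_invOfUnit g u rfl
  have hLeq : ∀ F, LL (fser Z) F = evalAt η F * LL (fser Z) 1 :=
    fun F => LL_eq_evalAt hf hη hfact hginv F
  have hL1 : (1 + C0) * LL (fser Z) 1 = 1 := by
    have h1 := LL_one_eq hf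
    have h2 := hLeq (PowerSeries.derivative (PowerSeries K) (fser Z))
    rw [hevd] at h2
    rw [h2] at h1
    linear_combination h1
  have hC00 : PowerSeries.constantCoeff (1 + C0) ≠ 0 := by
    have h1 : PowerSeries.constantCoeff C0 = 0 := by
      show PowerSeries.constantCoeff (PowerSeries.mk fun d =>
        lcoeff K 0 (PowerSeries.coeff d W)) = 0
      rw [← PowerSeries.coeff_zero_eq_constantCoeff_apply, PowerSeries.coeff_mk,
        PowerSeries.coeff_zero_eq_constantCoeff, hW0]
      exact map_zero (lcoeffHom 0)
    rw [map_add, h1, map_one, add_zero]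
    exact one_ne_zero
  have hLinv : LL (fser Z) 1 = (1 + C0)⁻¹ := by
    rw [PowerSeries.eq_inv_iff_mul_eq_one hC00]
    linear_combination hL1
  have hmain : (PowerSeries.mk fun d =>
        ∑ m ∈ Finset.range (d + 1),
          if a ≤ m then
            ∑ t ∈ Finset.Nat.antidiagonalTuple m (m - a),
              PowerSeries.coeff d
                (∏ l, ((-1 : K) ^ (t l) * (Nat.factorial (t l) : K)⁻¹) • Rneg (t l))
          else 0)
      = LL (fser Z) (PowerSeries.X ^ a) := by
    ext d
    rw [PowerSeries.coeff_mk, LL, PowerSeries.coeff_mk]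
    refine Finset.sum_congr rfl fun m _ => ?_
    rw [PowerSeries.coeff_X_pow_mul']
    split
    · rw [coeff_pow_tuple, map_sum]
      refine Finset.sum_congr rfl fun t _ => ?_
      congr 1
      refine Finset.prod_congr rfl fun l _ => ?_
      rw [fser, PowerSeries.coeff_mk]
      rfl
    · rw [map_zero]
  rw [hmain, hLeq, evalAt_X_pow hη a, hLinv]
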